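/- For x, y in the open unit disk, (1/2)[log((|x−y| + |xȳ−1|)/(1−|y|²)) + log((|y−x| + |yx̄−1|)/(1−|x|²))] = (1/2) log((|1−xȳ| + |x−y|)/(|1−xȳ| − |x−y|)); i.e., the mean-value symmetrization of the Apollonian weak metric of the unit disk equals the Poincaré metric of the disk. -/

import Mathlib

/-!
Write `a = |x - y|` and `b = |1 - x ȳ|`. The identity `b² - a² = (1 - |x|²)(1 - |y|²)` turns
the sum of the two Apollonian logarithms into `log ((a + b)² / (b² - a²)) = log ((b + a) / (b - a))`.
-/

open Complex ComplexConjugate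

namespace Complex

theorem norm_one_sub_mul_conj_sq_sub_norm_sub_sq (x y : ℂ) :
    ‖1 - x * conj y‖ ^ 2 - ‖x - y‖ ^ 2 = (1 - ‖x‖ ^ 2) * (1 - ‖y‖ ^ 2) := by
  simp only [Complex.sq_norm, normSq_apply, mul_re, mul_im, sub_re, sub_im, one_re, one_im,
    conj_re, conj_im]
  ring

theorem norm_mul_conj_sub_one (x y : ℂ) : ‖x * conj y - 1‖ = ‖1 - x * conj y‖ :=
  norm_sub_rev _ _

theorem norm_mul_conj_sub_one_swap (x y : ℂ) : ‖y * conj x - 1‖ = ‖1 - x * conj y‖ := by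
  rw [← norm_conj, map_sub, map_mul, conj_conj, map_one, mul_comm, norm_mul_conj_sub_one]

theorem one_sub_norm_sq_pos {x : ℂ} (hx : ‖x‖ < 1) : 0 < 1 - ‖x‖ ^ 2 := by
  nlinarith [norm_nonneg x]

theorem norm_sub_lt_norm_one_sub_mul_conj {x y : ℂ} (hx : ‖x‖ < 1) (hy : ‖y‖ < 1) :
    ‖x - y‖ < ‖1 - x * conj y‖ := by
  refine (pow_lt_pow_iff_left₀ (norm_nonneg _) (norm_nonneg _) two_ne_zero).mp ?_
  have := norm_one_sub_mul_conj_sq_sub_norm_sub_sq x y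
  nlinarith [mul_pos (one_sub_norm_sq_pos hx) (one_sub_norm_sq_pos hy)]

end Complex

theorem Real.log_div_add_log_div_of_sq_sub_sq_eq_mul {a b p q : ℝ} (hab : a + b ≠ 0)
    (hp : p ≠ 0) (hq : q ≠ 0) (h : b ^ 2 - a ^ 2 = p * q) :
    Real.log ((a + b) / q) + Real.log ((a + b) / p) = Real.log ((b + a) / (b - a)) := by
  have hba : b - a ≠ 0 := by
    rintro hba
    have : p * q = 0 := by rw [← h, sub_eq_zero.mp hba]; ring
    exact mul_ne_zero hp hq this
  rw [← Real.log_mul (div_ne_zero hab hq) (div_ne_zero hab hp)]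
  congr 1
  field_simp
  linear_combination (a + b) * h

/-- The mean-value symmetrization of the Apollonian weak metric of the unit disk
equals the Poincaré metric of the disk. -/
theorem apollonian_disk_symmetrization (x y : ℂ) (hx : ‖x‖ < 1)
    (hy : ‖y‖ < 1) :
    (1 / 2) * (Real.log ((‖x - y‖ + ‖x * (starRingEnd ℂ) y - 1‖) /
          (1 - ‖y‖ ^ 2)) +
        Real.log ((‖y - x‖ + ‖y * (starRingEnd ℂ) x - 1‖) /
          (1 - ‖x‖ ^ 2))) =
      (1 / 2) * Real.log ((‖1 - x * (starRingEnd ℂ) y‖ + ‖x - y‖) /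
        (‖1 - x * (starRingEnd ℂ) y‖ - ‖x - y‖)) := by
  rw [norm_mul_conj_sub_one, norm_mul_conj_sub_one_swap, norm_sub_rev y x]
  have hpos : 0 < ‖x - y‖ + ‖1 - x * conj y‖ :=
    add_pos_of_nonneg_of_pos (norm_nonneg _)
      ((norm_nonneg _).trans_lt (norm_sub_lt_norm_one_sub_mul_conj hx hy))
  rw [Real.log_div_add_log_div_of_sq_sub_sq_eq_mul hpos.ne' (one_sub_norm_sq_pos hx).ne'
    (one_sub_norm_sq_pos hy).ne' (norm_one_sub_mul_conj_sq_sub_norm_sub_sq x y)]
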